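/- arXiv:2208.00450 — 4 statements merged into one kernel-verified Lean document; each statement's English description precedes it below -/
import Mathlib

section
/- Let G be a Hermitian complex N×N matrix with G² = I, let A be a Hermitian complex N×N matrix, and let ψ ∈ ℂ^N. Define f(θ) = ⟨exp(−i(θ/2)·G) ψ, A · exp(−i(θ/2)·G) ψ⟩ (the expectation value of the observable A after the rotation gate exp(−iθG/2)). Then there exist real constants a, b, c such that f(θ) = a·cos θ + b·sin θ + c for all real θ. -/
/-!
Since `G ^ 2 = 1`, the exponential series splits into its even and odd parts and
`exp (-iθG/2) = cos (θ/2) - i sin (θ/2) G`. The expectation value is then a real quadratic form in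
`(cos (θ/2), sin (θ/2))`, which the double-angle formulas rewrite as `a cos θ + b sin θ + c`.
-/

open Matrix

section Involution

variable {𝔸 : Type*} [Ring 𝔸] [Algebra ℂ 𝔸] [TopologicalSpace 𝔸] [IsTopologicalRing 𝔸]
  [ContinuousSMul ℂ 𝔸] [T2Space 𝔸]

theorem exp_smul_eq_cosh_add_sinh_of_sq_eq_one {x : 𝔸} (hx : x ^ 2 = 1) (t : ℂ) :
    NormedSpace.exp (t • x) = Complex.cosh t • 1 + Complex.sinh t • x := by
  rw [NormedSpace.exp_eq_tsum ℂ]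
  refine HasSum.tsum_eq (HasSum.even_add_odd ?_ ?_)
  · convert (Complex.hasSum_cosh t).smul_const (1 : 𝔸) using 2 with k
    rw [smul_pow, pow_mul x, hx, one_pow, smul_smul, div_eq_inv_mul]
  · convert (Complex.hasSum_sinh t).smul_const x using 2 with k
    rw [smul_pow, pow_succ x, pow_mul x, hx, one_pow, one_mul, smul_smul, div_eq_inv_mul]

theorem exp_neg_I_mul_half_smul_of_sq_eq_one {x : 𝔸} (hx : x ^ 2 = 1) (θ : ℝ) :
    NormedSpace.exp ((-(Complex.I * ((θ : ℂ) / 2))) • x) =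
      (Real.cos (θ / 2) : ℂ) • 1 - (Complex.I * Real.sin (θ / 2)) • x := by
  have hθ : -(Complex.I * ((θ : ℂ) / 2)) = -(((θ / 2 : ℝ) : ℂ) * Complex.I) := by
    push_cast; ring
  rw [exp_smul_eq_cosh_add_sinh_of_sq_eq_one hx, hθ, Complex.cosh_neg, Complex.sinh_neg,
    Complex.cosh_mul_I, Complex.sinh_mul_I, neg_smul, ← sub_eq_add_neg, mul_comm,
    Complex.ofReal_cos, Complex.ofReal_sin]

end Involution

namespace Matrix.IsHermitian

variable {n : Type*} [Fintype n] {A : Matrix n n ℂ}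

theorem star_star_dotProduct_mulVec (hA : A.IsHermitian) (x y : n → ℂ) :
    star (star x ⬝ᵥ A *ᵥ y) = star y ⬝ᵥ A *ᵥ x := by
  rw [← star_dotProduct, star_mulVec, hA.eq, dotProduct_mulVec]

theorem star_dotProduct_mulVec_self_eq_re (hA : A.IsHermitian) (x : n → ℂ) :
    star x ⬝ᵥ A *ᵥ x = ((star x ⬝ᵥ A *ᵥ x).re : ℂ) :=
  (Complex.conj_eq_iff_re.mp (hA.star_star_dotProduct_mulVec x x)).symm

theorem star_dotProduct_mulVec_cos_sub_I_sin (hA : A.IsHermitian) (ψ φ : n → ℂ) (c s : ℝ) :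
    star ((c : ℂ) • ψ - (Complex.I * s) • φ) ⬝ᵥ A *ᵥ ((c : ℂ) • ψ - (Complex.I * s) • φ) =
      ((c ^ 2 * (star ψ ⬝ᵥ A *ᵥ ψ).re + s ^ 2 * (star φ ⬝ᵥ A *ᵥ φ).re +
        2 * c * s * (star ψ ⬝ᵥ A *ᵥ φ).im : ℝ) : ℂ) := by
  have hψ := hA.star_dotProduct_mulVec_self_eq_re ψ
  have hφ := hA.star_dotProduct_mulVec_self_eq_re φ
  have hφψ := hA.star_star_dotProduct_mulVec ψ φ
  simp only [star_sub, star_smul, mulVec_sub, mulVec_smul, sub_dotProduct, dotProduct_sub,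
    smul_dotProduct, dotProduct_smul, smul_eq_mul, star_mul', Complex.star_def,
    Complex.conj_ofReal, Complex.conj_I]
  rw [← hφψ, hψ, hφ]
  apply Complex.ext <;> simp [sq] <;> ring

end Matrix.IsHermitian

theorem expectation_rotation_sinusoidal_general (N : ℕ) (G A : Matrix (Fin N) (Fin N) ℂ)
    (hG2 : G ^ 2 = 1) (hA : A.IsHermitian) (ψ : Fin N → ℂ) :
    ∃ a b c : ℝ, ∀ θ : ℝ,
      star ((NormedSpace.exp ((-(Complex.I * ((θ : ℂ) / 2))) • G)).mulVec ψ) ⬝ᵥ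
          (A.mulVec ((NormedSpace.exp ((-(Complex.I * ((θ : ℂ) / 2))) • G)).mulVec ψ)) =
        ((a * Real.cos θ + b * Real.sin θ + c : ℝ) : ℂ) := by
  set z₁ := (star ψ ⬝ᵥ A *ᵥ ψ).re
  set z₂ := (star (G *ᵥ ψ) ⬝ᵥ A *ᵥ (G *ᵥ ψ)).re
  refine ⟨(z₁ - z₂) / 2, (star ψ ⬝ᵥ A *ᵥ (G *ᵥ ψ)).im, (z₁ + z₂) / 2, fun θ => ?_⟩
  rw [exp_neg_I_mul_half_smul_of_sq_eq_one hG2, sub_mulVec, smul_mulVec, smul_mulVec, one_mulVec,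
    hA.star_dotProduct_mulVec_cos_sub_I_sin]
  have hcos : Real.cos θ = Real.cos (θ / 2) ^ 2 - Real.sin (θ / 2) ^ 2 := by
    rw [← Real.cos_two_mul', mul_div_cancel₀ θ two_ne_zero]
  have hsin : Real.sin θ = 2 * Real.sin (θ / 2) * Real.cos (θ / 2) := by
    rw [← Real.sin_two_mul, mul_div_cancel₀ θ two_ne_zero]
  rw [hcos, hsin]
  congr 1
  linear_combination (z₁ + z₂) / 2 * Real.sin_sq_add_cos_sq (θ / 2)

/-- The expectation value `f(θ) = ⟨e^{-iθG/2} ψ, A e^{-iθG/2} ψ⟩` of a Hermitian observable `A`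
after a rotation gate generated by a Hermitian involution `G` (with `G² = I`) is of the form
`a cos θ + b sin θ + c` for real constants `a`, `b`, `c`. -/
theorem expectation_rotation_sinusoidal (N : ℕ) (G A : Matrix (Fin N) (Fin N) ℂ)
    (hG : G.IsHermitian) (hG2 : G ^ 2 = 1) (hA : A.IsHermitian) (ψ : Fin N → ℂ) :
    ∃ a b c : ℝ, ∀ θ : ℝ,
      star ((NormedSpace.exp ((-(Complex.I * ((θ : ℂ) / 2))) • G)).mulVec ψ) ⬝ᵥ
          (A.mulVec ((NormedSpace.exp ((-(Complex.I * ((θ : ℂ) / 2))) • G)).mulVec ψ)) =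
        ((a * Real.cos θ + b * Real.sin θ + c : ℝ) : ℂ) :=
  expectation_rotation_sinusoidal_general N G A hG2 hA ψ
end

section
/- Let d ≥ 2 and N_D be positive integers, λ ≥ 0, and for k = 1, …, N_D let ŷ_k : ℝ^d → ℝ be twice continuously differentiable with ŷ_k(θ) ∈ [0,1], |∂_j ŷ_k(θ)| ≤ 1 and |∂_j ∂_l ŷ_k(θ)| ≤ 1 for all θ and all indices j, l, and let labels y_k ∈ [0,1]. Define the regularized MSE loss L(θ) = (1/(2N_D)) Σ_k (ŷ_k(θ) − y_k)² + (λ/2)‖θ‖₂². Then the gradient ∇L is Lipschitz on ℝ^d with Lipschitz constant S = (3/2 + λ)·d², i.e., L is S-smooth with S = (3/2 + λ)d². -/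
/-!
The Hessian of `L` is `(1/N) ∑ₖ ((ŷₖ - yₖ) D²ŷₖ + Dŷₖ ⊗ Dŷₖ) + λ ⟪·, ·⟫`. Bounding the entries of
`Dŷₖ` and `D²ŷₖ` by `1` bounds their operator norms by `√d` and `d`, and `|ŷₖ - yₖ| ≤ 1`, so the
Hessian has norm at most `2d + λ ≤ (3/2 + λ) d²`. By the mean value inequality `DL` is Lipschitz
with that constant, and so is `∇L`, its image under the Riesz isometry.
-/

open Real

namespace EuclideanSpace

variable {ι : Type*} [Fintype ι] [DecidableEq ι]

theorem norm_le_sqrt_card_mul_of_abs_apply_single_le (φ : EuclideanSpace ℝ ι →L[ℝ] ℝ)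
    {c : ℝ} (hc : 0 ≤ c) (h : ∀ j, |φ (single j 1)| ≤ c) :
    ‖φ‖ ≤ √(Fintype.card ι) * c := by
  set w := (InnerProductSpace.toDual ℝ (EuclideanSpace ℝ ι)).symm φ
  have hw : ∀ j, w j = φ (single j 1) := fun j => by
    rw [← InnerProductSpace.toDual_symm_apply, inner_single_right, one_mul]; rfl
  calc ‖φ‖ = ‖w‖ := ((InnerProductSpace.toDual ℝ _).symm.norm_map φ).symm
    _ = √(∑ j, |φ (single j 1)| ^ 2) := by simp [EuclideanSpace.norm_eq, hw]
    _ ≤ √(∑ _j : ι, c ^ 2) :=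
      Real.sqrt_le_sqrt (Finset.sum_le_sum fun j _ => pow_le_pow_left₀ (abs_nonneg _) (h j) 2)
    _ = √(Fintype.card ι) * c := by simp [Real.sqrt_sq hc]

theorem norm_le_card_mul_of_abs_apply_single_single_le
    (B : EuclideanSpace ℝ ι →L[ℝ] EuclideanSpace ℝ ι →L[ℝ] ℝ) {c : ℝ} (hc : 0 ≤ c)
    (h : ∀ j l, |B (single j 1) (single l 1)| ≤ c) :
    ‖B‖ ≤ Fintype.card ι * c := by
  have hcol : ∀ u l, |B u (single l 1)| ≤ √(Fintype.card ι) * c * ‖u‖ := fun u l =>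
    (B.flip (single l 1)).le_of_opNorm_le
      (norm_le_sqrt_card_mul_of_abs_apply_single_le _ hc fun j => h j l) u
  refine B.opNorm_le_bound (by positivity) fun u => ?_
  calc ‖B u‖ ≤ √(Fintype.card ι) * (√(Fintype.card ι) * c * ‖u‖) :=
        norm_le_sqrt_card_mul_of_abs_apply_single_le _ (by positivity) (hcol u)
    _ = Fintype.card ι * c * ‖u‖ := by
        rw [← mul_assoc, ← mul_assoc, Real.mul_self_sqrt (Nat.cast_nonneg _)]

end EuclideanSpace

theorem fderiv_clm_apply_const_apply {𝕜 E G H : Type*} [NontriviallyNormedField 𝕜]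
    [NormedAddCommGroup E] [NormedSpace 𝕜 E] [NormedAddCommGroup G] [NormedSpace 𝕜 G]
    [NormedAddCommGroup H] [NormedSpace 𝕜 H] {c : E → G →L[𝕜] H} {x : E}
    (hc : DifferentiableAt 𝕜 c x) (v : G) (u : E) :
    fderiv 𝕜 (fun x' => c x' v) x u = fderiv 𝕜 c x u v := by
  simp [fderiv_clm_apply hc (differentiableAt_const v)]

theorem norm_inv_card_smul_sum_le {ι F : Type*} [Fintype ι] [SeminormedAddCommGroup F]
    [NormedSpace ℝ F] (f : ι → F) {c : ℝ} (hc : 0 ≤ c) (h : ∀ k, ‖f k‖ ≤ c) :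
    ‖(Fintype.card ι : ℝ)⁻¹ • ∑ k, f k‖ ≤ c := by
  rcases isEmpty_or_nonempty ι with _ | _
  · simpa using hc
  have hcard : (0 : ℝ) < Fintype.card ι := by exact_mod_cast Fintype.card_pos
  calc ‖(Fintype.card ι : ℝ)⁻¹ • ∑ k, f k‖ ≤ (Fintype.card ι : ℝ)⁻¹ * ∑ _k : ι, c := by
        rw [norm_smul, Real.norm_of_nonneg (by positivity)]
        exact mul_le_mul_of_nonneg_left
          ((norm_sum_le _ _).trans (Finset.sum_le_sum fun k _ => h k)) (by positivity)
    _ = c := by simp [field]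

theorem lipschitzWith_gradient_of_norm_le {E : Type*} [NormedAddCommGroup E]
    [InnerProductSpace ℝ E] [CompleteSpace E] {f : E → ℝ} {f' : E → E →L[ℝ] ℝ}
    {f'' : E → E →L[ℝ] E →L[ℝ] ℝ} {C : ℝ} (hf : ∀ x, HasFDerivAt f (f' x) x)
    (hf' : ∀ x, HasFDerivAt f' (f'' x) x) (hC : ∀ x, ‖f'' x‖ ≤ C) :
    LipschitzWith C.toNNReal (gradient f) := by
  have hfderiv : fderiv ℝ f = f' := funext fun x => (hf x).fderiv
  have hlip : LipschitzWith C.toNNReal f' :=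
    lipschitzWith_of_nnnorm_fderiv_le (fun x => (hf' x).differentiableAt) fun x => by
      rw [(hf' x).fderiv, ← NNReal.coe_le_coe, coe_nnnorm]
      exact (hC x).trans (Real.le_coe_toNNReal C)
  have hgrad : gradient f = (InnerProductSpace.toDual ℝ E).symm ∘ f' := by
    rw [← hfderiv]; rfl
  simpa [hgrad] using (InnerProductSpace.toDual ℝ E).symm.lipschitz.comp hlip

section MSELoss

variable {E : Type*} [NormedAddCommGroup E] [InnerProductSpace ℝ E] {N : ℕ}
  (yhat : Fin N → E → ℝ) (y : Fin N → ℝ) (lam : ℝ)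

/-- `innerSL ℝ` retyped: the conjugation in `E →L⋆[ℝ] E →L[ℝ] ℝ` is trivial, but it blocks
adding `innerSL ℝ` to elements of `E →L[ℝ] E →L[ℝ] ℝ`. -/
noncomputable def realInnerSL : E →L[ℝ] E →L[ℝ] ℝ := innerSL ℝ

noncomputable def mseLoss (θ : E) : ℝ :=
  (1 / (2 * N)) * ∑ k, (yhat k θ - y k) ^ 2 + (lam / 2) * ‖θ‖ ^ 2

noncomputable def mseLossFDeriv (θ : E) : E →L[ℝ] ℝ :=
  (N : ℝ)⁻¹ • ∑ k, (yhat k θ - y k) • fderiv ℝ (yhat k) θ + lam • innerSL ℝ θ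

noncomputable def mseLossHessian (θ : E) : E →L[ℝ] E →L[ℝ] ℝ :=
  (N : ℝ)⁻¹ • ∑ k, ((yhat k θ - y k) • fderiv ℝ (fderiv ℝ (yhat k)) θ
      + (fderiv ℝ (yhat k) θ).smulRight (fderiv ℝ (yhat k) θ))
    + lam • realInnerSL

variable {yhat}

theorem hasFDerivAt_mseLoss (hyhat : ∀ k, Differentiable ℝ (yhat k)) (θ : E) :
    HasFDerivAt (mseLoss yhat y lam) (mseLossFDeriv yhat y lam θ) θ := by
  have hsq : ∀ k, HasFDerivAt (fun θ' => (yhat k θ' - y k) ^ 2)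
      ((2 * (yhat k θ - y k)) • fderiv ℝ (yhat k) θ) θ := fun k => by
    simpa using (((hyhat k θ).hasFDerivAt).sub_const (y k)).pow 2
  have hnorm : HasFDerivAt (fun θ' : E => ‖θ'‖ ^ 2) (2 • innerSL ℝ θ) θ := by
    simpa using (hasFDerivAt_id θ).norm_sq
  refine (((HasFDerivAt.fun_sum (u := Finset.univ) fun k _ => hsq k).const_mul
    (1 / (2 * (N : ℝ)))).add (hnorm.const_mul (lam / 2))).congr_fderiv ?_
  ext v
  simp only [mseLossFDeriv, add_apply, smul_apply, sum_apply, coe_innerSL_apply, smul_eq_mul,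
    nsmul_eq_mul, one_div, mul_inv_rev, Finset.mul_sum, Nat.cast_ofNat]
  congr 1
  · exact Finset.sum_congr rfl fun k _ => by ring
  · ring

theorem hasFDerivAt_mseLossFDeriv (hyhat : ∀ k, ContDiff ℝ 2 (yhat k)) (θ : E) :
    HasFDerivAt (mseLossFDeriv yhat y lam) (mseLossHessian yhat y lam θ) θ := by
  have hterm : ∀ k, HasFDerivAt (fun θ' => (yhat k θ' - y k) • fderiv ℝ (yhat k) θ')
      ((yhat k θ - y k) • fderiv ℝ (fderiv ℝ (yhat k)) θ
        + (fderiv ℝ (yhat k) θ).smulRight (fderiv ℝ (yhat k) θ)) θ := fun k =>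
    ((((hyhat k).differentiable two_ne_zero θ).hasFDerivAt).sub_const (y k)).smul
      ((((hyhat k).fderiv_right (m := 1) le_rfl).differentiable one_ne_zero θ).hasFDerivAt)
  exact ((HasFDerivAt.fun_sum (u := Finset.univ) fun k _ => hterm k).const_smul
    (N : ℝ)⁻¹).add (realInnerSL.hasFDerivAt.const_smul lam)

theorem norm_mseLossHessian_le {a b : ℝ} (hres : ∀ k θ, |yhat k θ - y k| ≤ 1)
    (hD : ∀ k θ, ‖fderiv ℝ (yhat k) θ‖ ≤ a) (hD2 : ∀ k θ, ‖fderiv ℝ (fderiv ℝ (yhat k)) θ‖ ≤ b)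
    (hb : 0 ≤ b) (θ : E) : ‖mseLossHessian yhat y lam θ‖ ≤ b + a ^ 2 + |lam| := by
  have hterm : ∀ k, ‖(yhat k θ - y k) • fderiv ℝ (fderiv ℝ (yhat k)) θ
      + (fderiv ℝ (yhat k) θ).smulRight (fderiv ℝ (yhat k) θ)‖ ≤ b + a ^ 2 := fun k => by
    have ha : 0 ≤ a := (norm_nonneg _).trans (hD k θ)
    refine ((ContinuousLinearMap.opNorm_add_le _ _).trans <|
      add_le_add (ContinuousLinearMap.opNorm_smul_le _ _)
        (ContinuousLinearMap.norm_smulRight_apply _ _).le).trans ?_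
    rw [Real.norm_eq_abs, sq, ← one_mul b]
    gcongr
    exacts [hres k θ, hD2 k θ, hD k θ, hD k θ]
  have hridge : ‖lam • (realInnerSL : E →L[ℝ] E →L[ℝ] ℝ)‖ ≤ |lam| := by
    refine (realInnerSL.opNorm_smul_le lam).trans ?_
    rw [Real.norm_eq_abs]
    exact mul_le_of_le_one_right (abs_nonneg lam) (norm_innerSL_le ℝ)
  have havg := norm_inv_card_smul_sum_le (F := E →L[ℝ] E →L[ℝ] ℝ) _
    (add_nonneg hb (sq_nonneg a)) hterm
  rw [Fintype.card_fin] at havg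
  exact (ContinuousLinearMap.opNorm_add_le _ _).trans (add_le_add havg hridge)

variable [CompleteSpace E]

theorem lipschitzWith_gradient_mseLoss {a b : ℝ} (hyhat : ∀ k, ContDiff ℝ 2 (yhat k))
    (hres : ∀ k θ, |yhat k θ - y k| ≤ 1) (hD : ∀ k θ, ‖fderiv ℝ (yhat k) θ‖ ≤ a)
    (hD2 : ∀ k θ, ‖fderiv ℝ (fderiv ℝ (yhat k)) θ‖ ≤ b) (hb : 0 ≤ b) :
    LipschitzWith (b + a ^ 2 + |lam|).toNNReal (gradient (mseLoss yhat y lam)) :=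
  lipschitzWith_gradient_of_norm_le
    (hasFDerivAt_mseLoss y lam fun k => (hyhat k).differentiable two_ne_zero)
    (hasFDerivAt_mseLossFDeriv y lam hyhat) (norm_mseLossHessian_le y lam hres hD hD2 hb)

end MSELoss

theorem mse_loss_smooth_general (d ND : ℕ) (hd : 2 ≤ d)
    (lam : ℝ) (hlam : 0 ≤ lam)
    (yhat : Fin ND → EuclideanSpace ℝ (Fin d) → ℝ) (y : Fin ND → ℝ)
    (hsmooth : ∀ k, ContDiff ℝ 2 (yhat k))
    (hrange : ∀ k θ, yhat k θ ∈ Set.Icc (0 : ℝ) 1)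
    (hpartial1 : ∀ k (θ : EuclideanSpace ℝ (Fin d)) (j : Fin d),
      |fderiv ℝ (yhat k) θ (EuclideanSpace.single j 1)| ≤ 1)
    (hpartial2 : ∀ k (θ : EuclideanSpace ℝ (Fin d)) (j l : Fin d),
      |fderiv ℝ (fun θ' : EuclideanSpace ℝ (Fin d) =>
          fderiv ℝ (yhat k) θ' (EuclideanSpace.single l 1)) θ (EuclideanSpace.single j 1)| ≤ 1)
    (hy : ∀ k, y k ∈ Set.Icc (0 : ℝ) 1)
    (L : EuclideanSpace ℝ (Fin d) → ℝ)
    (hL : ∀ θ, L θ = (1 / (2 * ND)) * ∑ k, (yhat k θ - y k) ^ 2 + (lam / 2) * ‖θ‖ ^ 2) :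
    LipschitzWith (Real.toNNReal ((3 / 2 + lam) * d ^ 2)) (gradient L) := by
  obtain rfl : L = mseLoss yhat y lam := funext hL
  have hres : ∀ k θ, |yhat k θ - y k| ≤ 1 := fun k θ =>
    abs_sub_le_of_nonneg_of_le (hrange k θ).1 (hrange k θ).2 (hy k).1 (hy k).2
  have hD : ∀ k θ, ‖fderiv ℝ (yhat k) θ‖ ≤ √d := fun k θ => by
    simpa using EuclideanSpace.norm_le_sqrt_card_mul_of_abs_apply_single_le _ zero_le_one
      (hpartial1 k θ)
  have hD2 : ∀ k θ, ‖fderiv ℝ (fderiv ℝ (yhat k)) θ‖ ≤ d := fun k θ => by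
    have hdiff := ((hsmooth k).fderiv_right (m := 1) le_rfl).differentiable one_ne_zero θ
    have := EuclideanSpace.norm_le_card_mul_of_abs_apply_single_single_le _ zero_le_one
      fun j l => by rw [← fderiv_clm_apply_const_apply hdiff]; exact hpartial2 k θ j l
    rwa [Fintype.card_fin, mul_one] at this
  refine (lipschitzWith_gradient_mseLoss y lam hsmooth hres hD hD2 (by positivity)).weaken
    (Real.toNNReal_le_toNNReal ?_)
  have hd' : (2 : ℝ) ≤ d := by exact_mod_cast hd
  rw [abs_of_nonneg hlam, Real.sq_sqrt (Nat.cast_nonneg d)]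
  nlinarith [mul_nonneg hlam (by nlinarith : (0 : ℝ) ≤ d ^ 2 - 1),
    mul_nonneg (by linarith : (0 : ℝ) ≤ d) (by linarith : (0 : ℝ) ≤ 3 / 2 * d - 2)]

/-- The regularized MSE loss `L(θ) = (1/(2 N_D)) ∑ₖ (ŷₖ(θ) - yₖ)² + (λ/2) ‖θ‖₂²` is
`S`-smooth with `S = (3/2 + λ) d²`: its gradient is Lipschitz with constant `(3/2 + λ) d²`. -/
theorem mse_loss_smooth (d ND : ℕ) (hd : 2 ≤ d) (hND : 0 < ND)
    (lam : ℝ) (hlam : 0 ≤ lam)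
    (yhat : Fin ND → EuclideanSpace ℝ (Fin d) → ℝ) (y : Fin ND → ℝ)
    (hsmooth : ∀ k, ContDiff ℝ 2 (yhat k))
    (hrange : ∀ k θ, yhat k θ ∈ Set.Icc (0 : ℝ) 1)
    (hpartial1 : ∀ k (θ : EuclideanSpace ℝ (Fin d)) (j : Fin d),
      |fderiv ℝ (yhat k) θ (EuclideanSpace.single j 1)| ≤ 1)
    (hpartial2 : ∀ k (θ : EuclideanSpace ℝ (Fin d)) (j l : Fin d),
      |fderiv ℝ (fun θ' : EuclideanSpace ℝ (Fin d) =>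
          fderiv ℝ (yhat k) θ' (EuclideanSpace.single l 1)) θ (EuclideanSpace.single j 1)| ≤ 1)
    (hy : ∀ k, y k ∈ Set.Icc (0 : ℝ) 1)
    (L : EuclideanSpace ℝ (Fin d) → ℝ)
    (hL : ∀ θ, L θ = (1 / (2 * ND)) * ∑ k, (yhat k θ - y k) ^ 2 + (lam / 2) * ‖θ‖ ^ 2) :
    LipschitzWith (Real.toNNReal ((3 / 2 + lam) * d ^ 2)) (gradient L) :=
  mse_loss_smooth_general d ND hd lam hlam yhat y hsmooth hrange hpartial1 hpartial2 hy L hL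
end

section
/- One-step descent with multiplicatively biased gradients: let d be a positive integer, S > 0, and let L : ℝ^d → ℝ be differentiable with ∇L Lipschitz with constant S. Fix θ ∈ ℝ^d and let g ∈ ℝ^d have components g_j = a_j · ∂_j L(θ) + c_j, where 0 ≤ a_j ≤ 1 and |c_j| ≤ B for all j. Then L(θ − (1/S)·g) ≤ L(θ) − (1/(2S)) Σ_j a_j (∂_j L(θ))² + (1/S) Σ_j (1 − a_j)·B·|∂_j L(θ)| + (d·B²)/(2S). -/
/-!
By the descent lemma for an `S`-smooth function, the step `θ - (1/S) • g` lowers `L` by at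
least `(‖∇L(θ)‖² - ‖g - ∇L(θ)‖²) / (2S)`: an inexact gradient step is an exact one penalized
by the squared error of the gradient estimate. With `gⱼ = aⱼ ∂ⱼL(θ) + cⱼ` this error splits
over the coordinates, and writing `D = ∂ⱼL(θ)`,
`(gⱼ - D)² - D² = -aⱼD² - aⱼ(1 - aⱼ)D² - 2(1 - aⱼ)cⱼD + cⱼ²`,
whose last three terms are at most `0`, `2(1 - aⱼ)B|D|` and `B²`.
-/

open InnerProductSpace

section DescentLemma

variable {F : Type*} [NormedAddCommGroup F] [InnerProductSpace ℝ F] [CompleteSpace F]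
  {f : F → ℝ}

theorem hasDerivAt_comp_add_smul_of_differentiable (hf : Differentiable ℝ f) (x v : F) (t : ℝ) :
    HasDerivAt (fun t : ℝ => f (x + t • v)) ⟪gradient f (x + t • v), v⟫_ℝ t := by
  have hline : HasDerivAt (fun t : ℝ => x + t • v) v t := by
    simpa using ((hasDerivAt_id t).smul_const v).const_add x
  exact ((hf _).hasGradientAt.hasFDerivAt.comp_hasDerivAt t hline).congr_deriv (by simp)

theorem inner_gradient_add_smul_le_of_lipschitzWith {K : NNReal}
    (hlip : LipschitzWith K (gradient f)) (x v : F) {t : ℝ} (ht : 0 ≤ t) :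
    ⟪gradient f (x + t • v), v⟫_ℝ ≤ ⟪gradient f x, v⟫_ℝ + K * t * ‖v‖ ^ 2 := by
  have hgrad : ‖gradient f (x + t • v) - gradient f x‖ ≤ K * (t * ‖v‖) := by
    simpa [← dist_eq_norm, norm_smul, abs_of_nonneg ht] using hlip.dist_le_mul (x + t • v) x
  have hcs := real_inner_le_norm (gradient f (x + t • v) - gradient f x) v
  rw [inner_sub_left] at hcs
  nlinarith [norm_nonneg v]

theorem apply_add_le_of_lipschitzWith_gradient (hf : Differentiable ℝ f) {K : NNReal}
    (hlip : LipschitzWith K (gradient f)) (x v : F) :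
    f (x + v) ≤ f x + ⟪gradient f x, v⟫_ℝ + K / 2 * ‖v‖ ^ 2 := by
  have hline := hasDerivAt_comp_add_smul_of_differentiable hf x v
  -- compare `t ↦ f (x + t • v)` on `[0, 1]` with its quadratic model, which has the larger slope
  have hmodel : ∀ t : ℝ, HasDerivAt
      (fun t : ℝ => f x + t * ⟪gradient f x, v⟫_ℝ + K / 2 * t ^ 2 * ‖v‖ ^ 2)
      (⟪gradient f x, v⟫_ℝ + K * t * ‖v‖ ^ 2) t := fun t =>
    ((((hasDerivAt_id t).mul_const _).const_add (f x)).add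
      (((hasDerivAt_pow 2 t).const_mul (K / 2 : ℝ)).mul_const _)).congr_deriv (by ring)
  have hle := image_le_of_deriv_right_le_deriv_boundary (a := 0) (b := 1)
    (fun t _ => (hline t).continuousAt.continuousWithinAt) (fun t _ => (hline t).hasDerivWithinAt)
    (by simp) (fun t _ => (hmodel t).continuousAt.continuousWithinAt)
    (fun t _ => (hmodel t).hasDerivWithinAt)
    (fun t ht => inner_gradient_add_smul_le_of_lipschitzWith hlip x v ht.1)
    (Set.right_mem_Icc.2 zero_le_one)
  simpa using hle

theorem apply_sub_smul_le_of_lipschitzWith_gradient (hf : Differentiable ℝ f) {S : ℝ} (hS : 0 < S)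
    (hlip : LipschitzWith S.toNNReal (gradient f)) (x v : F) :
    f (x - (1 / S) • v) ≤ f x + (‖v - gradient f x‖ ^ 2 - ‖gradient f x‖ ^ 2) / (2 * S) := by
  have h := apply_add_le_of_lipschitzWith_gradient hf hlip x (-((1 / S) • v))
  rw [← sub_eq_add_neg, Real.coe_toNNReal _ hS.le, inner_neg_right, real_inner_smul_right,
    norm_neg, norm_smul, Real.norm_of_nonneg (by positivity)] at h
  rw [norm_sub_sq_real, real_inner_comm]
  calc f (x - (1 / S) • v)
      ≤ f x + -(1 / S * ⟪gradient f x, v⟫_ℝ) + S / 2 * (1 / S * ‖v‖) ^ 2 := h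
    _ = _ := by field_simp; ring

end DescentLemma

theorem sq_sub_sq_le_of_multiplicative_bias {a D c B : ℝ} (ha0 : 0 ≤ a) (ha1 : a ≤ 1)
    (hc : |c| ≤ B) :
    (a * D + c - D) ^ 2 - D ^ 2 ≤ -(a * D ^ 2) + 2 * ((1 - a) * B * |D|) + B ^ 2 := by
  have hcD : -(c * D) ≤ B * |D| := by
    calc -(c * D) ≤ |c| * |D| := by rw [← abs_mul]; exact neg_le_abs _
      _ ≤ B * |D| := by gcongr
  have hc2 : c ^ 2 ≤ B ^ 2 := sq_le_sq' (neg_le_of_abs_le hc) (le_of_abs_le hc)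
  nlinarith [mul_le_mul_of_nonneg_left hcD (sub_nonneg.2 ha1),
    mul_nonneg (mul_nonneg ha0 (sub_nonneg.2 ha1)) (sq_nonneg D)]

theorem one_step_biased_descent_general (d : ℕ) (S : ℝ) (hS : 0 < S)
    (L : EuclideanSpace ℝ (Fin d) → ℝ) (hdiff : Differentiable ℝ L)
    (hlip : LipschitzWith S.toNNReal (gradient L))
    (θ g : EuclideanSpace ℝ (Fin d)) (a c : Fin d → ℝ) (B : ℝ)
    (ha0 : ∀ j, 0 ≤ a j) (ha1 : ∀ j, a j ≤ 1) (hc : ∀ j, |c j| ≤ B)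
    (hg : ∀ j, g j = a j * gradient L θ j + c j) :
    L (θ - (1 / S) • g) ≤
      L θ - (1 / (2 * S)) * ∑ j, a j * (gradient L θ j) ^ 2 +
        (1 / S) * ∑ j, (1 - a j) * B * |gradient L θ j| + d * B ^ 2 / (2 * S) := by
  have herror : ‖g - gradient L θ‖ ^ 2 - ‖gradient L θ‖ ^ 2 ≤
      -∑ j, a j * (gradient L θ j) ^ 2 + 2 * ∑ j, (1 - a j) * B * |gradient L θ j| +
        d * B ^ 2 := by
    simp only [EuclideanSpace.real_norm_sq_eq, PiLp.sub_apply, ← Finset.sum_sub_distrib]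
    calc ∑ j, ((g j - gradient L θ j) ^ 2 - gradient L θ j ^ 2)
        ≤ ∑ j, (-(a j * gradient L θ j ^ 2) + 2 * ((1 - a j) * B * |gradient L θ j|) +
            B ^ 2) :=
          Finset.sum_le_sum fun j _ =>
            hg j ▸ sq_sub_sq_le_of_multiplicative_bias (ha0 j) (ha1 j) (hc j)
      _ = _ := by simp [Finset.sum_add_distrib, Finset.mul_sum]
  calc L (θ - (1 / S) • g)
      ≤ L θ + (‖g - gradient L θ‖ ^ 2 - ‖gradient L θ‖ ^ 2) / (2 * S) :=
        apply_sub_smul_le_of_lipschitzWith_gradient hdiff hS hlip θ g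
    _ ≤ L θ + (-∑ j, a j * (gradient L θ j) ^ 2 +
          2 * ∑ j, (1 - a j) * B * |gradient L θ j| + d * B ^ 2) / (2 * S) := by gcongr
    _ = _ := by ring

/-- One-step descent with multiplicatively biased gradients: if `L` is differentiable with
`S`-Lipschitz gradient and the descent direction has components
`gⱼ = aⱼ ∂ⱼL(θ) + cⱼ` with `0 ≤ aⱼ ≤ 1` and `|cⱼ| ≤ B`, then
`L(θ - (1/S) g) ≤ L(θ) - (1/(2S)) ∑ⱼ aⱼ (∂ⱼL(θ))² + (1/S) ∑ⱼ (1 - aⱼ) B |∂ⱼL(θ)| + dB²/(2S)`. -/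
theorem one_step_biased_descent (d : ℕ) (hd : 0 < d) (S : ℝ) (hS : 0 < S)
    (L : EuclideanSpace ℝ (Fin d) → ℝ) (hdiff : Differentiable ℝ L)
    (hlip : LipschitzWith S.toNNReal (gradient L))
    (θ g : EuclideanSpace ℝ (Fin d)) (a c : Fin d → ℝ) (B : ℝ)
    (ha0 : ∀ j, 0 ≤ a j) (ha1 : ∀ j, a j ≤ 1) (hc : ∀ j, |c j| ≤ B)
    (hg : ∀ j, g j = a j * gradient L θ j + c j) :
    L (θ - (1 / S) • g) ≤
      L θ - (1 / (2 * S)) * ∑ j, a j * (gradient L θ j) ^ 2 +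
        (1 / S) * ∑ j, (1 - a j) * B * |gradient L θ j| + d * B ^ 2 / (2 * S) :=
  one_step_biased_descent_general d S hS L hdiff hlip θ g a c B ha0 ha1 hc hg
end

section
/- Convergence of gradient descent with multiplicatively biased gradients (deterministic skeleton of Theorem 1): let d, T be positive integers, S > 0, α ∈ (0,1], B ≥ 0, G ≥ 0. Let L : ℝ^d → ℝ be differentiable with ∇L Lipschitz with constant S, bounded below by L* ∈ ℝ, and with |∂_j L(θ)| ≤ G for all θ and all j. Let θ⁰, θ¹, …, θ^T ∈ ℝ^d satisfy θ^{t+1} = θ^t − (1/S)·g^t, where each g^t has components g^t_j = a^t_j · ∂_j L(θ^t) + c^t_j with α ≤ a^t_j ≤ 1 and |c^t_j| ≤ B. Then (1/T) Σ_{t=0}^{T−1} ‖∇L(θ^t)‖₂² ≤ 2S(L(θ⁰) − L*)/(α·T) + (2d/α)·((1 − α)·B·G + B²/2). In particular the average squared gradient norm is bounded by a term decaying as O(1/T) plus a noise-induced constant, so the biased-gradient iteration converges at the same O(1/√T) rate as the unbiased one. -/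
/-!
A step of length `1/S` along `g` lowers an `S`-smooth `L` by at least `(⟪∇L, g⟫ - ‖g‖²/2) / S`
(descent lemma). Coordinatewise, a multiplicative bias `a ∈ [α, 1]` keeps at least `α/2` of
`(∂ⱼL)²` in this quantity, while the additive bias `c` costs at most `(1 - α) B G + B²/2`.
Summing over `T` steps, the decrease of `L` telescopes and is bounded by `L(θ⁰) - L*`.
-/

open Finset Set

theorem le_add_deriv_add_of_deriv_sub_le {φ φ' : ℝ → ℝ} {K : ℝ}
    (hφ : ∀ s, HasDerivAt φ (φ' s) s) (hK : ∀ s ∈ Ioo (0 : ℝ) 1, φ' s - φ' 0 ≤ K * s) :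
    φ 1 ≤ φ 0 + φ' 0 + K / 2 := by
  set ψ : ℝ → ℝ := fun s ↦ s * φ' 0 + K / 2 * s ^ 2 - φ s
  have hψ : ∀ s, HasDerivAt ψ (φ' 0 + K * s - φ' s) s := fun s ↦ by
    have h := (((hasDerivAt_id' s).mul_const (φ' 0)).fun_add
      ((hasDerivAt_pow 2 s).const_mul (K / 2))).fun_sub (hφ s)
    exact h.congr_deriv (by ring)
  have hmono : MonotoneOn ψ (Icc 0 1) :=
    monotoneOn_of_hasDerivWithinAt_nonneg (convex_Icc 0 1)
      (fun s _ ↦ (hψ s).continuousAt.continuousWithinAt) (fun s _ ↦ (hψ s).hasDerivWithinAt)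
      (fun s hs ↦ by rw [interior_Icc] at hs; linarith [hK s hs])
  have := hmono (left_mem_Icc.2 zero_le_one) (right_mem_Icc.2 zero_le_one) zero_le_one
  simp only [ψ] at this
  linarith

section Smooth

variable {F : Type*} [NormedAddCommGroup F] [InnerProductSpace ℝ F] [CompleteSpace F]

theorem le_add_inner_add_of_lipschitzWith_gradient {L : F → ℝ} (hL : Differentiable ℝ L) {S : ℝ}
    (hS : 0 ≤ S) (hlip : LipschitzWith S.toNNReal (gradient L)) (x y : F) :
    L y ≤ L x + inner ℝ (gradient L x) (y - x) + S / 2 * ‖y - x‖ ^ 2 := by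
  set v := y - x
  have hφ : ∀ s : ℝ, HasDerivAt (fun s ↦ L (x + s • v)) (inner ℝ (gradient L (x + s • v)) v) s :=
    fun s ↦ by
      rw [inner_gradient_left]
      have hline : HasDerivAt (fun s : ℝ ↦ x + s • v) v s := by
        simpa using ((hasDerivAt_id s).smul_const v).const_add x
      exact (hL _).hasFDerivAt.comp_hasDerivAt s hline
  have hK : ∀ s ∈ Ioo (0 : ℝ) 1, inner ℝ (gradient L (x + s • v)) v
      - inner ℝ (gradient L (x + (0 : ℝ) • v)) v ≤ S * ‖v‖ ^ 2 * s := fun s hs ↦ by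
    rw [zero_smul, add_zero, ← inner_sub_left]
    have hgrad : ‖gradient L (x + s • v) - gradient L x‖ ≤ S * (s * ‖v‖) := by
      simpa [← dist_eq_norm, norm_smul, abs_of_pos hs.1, Real.coe_toNNReal S hS]
        using hlip.dist_le_mul (x + s • v) x
    calc _ ≤ ‖gradient L (x + s • v) - gradient L x‖ * ‖v‖ := real_inner_le_norm _ _
      _ ≤ S * (s * ‖v‖) * ‖v‖ := by gcongr
      _ = S * ‖v‖ ^ 2 * s := by ring
  have := le_add_deriv_add_of_deriv_sub_le hφ hK
  simp only [zero_smul, add_zero, one_smul, v, add_sub_cancel] at this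
  linarith

theorem inner_sub_norm_sq_half_le_mul_sub_of_lipschitzWith_gradient {L : F → ℝ}
    (hL : Differentiable ℝ L) {S : ℝ} (hS : 0 < S) (hlip : LipschitzWith S.toNNReal (gradient L))
    (x v : F) :
    inner ℝ (gradient L x) v - ‖v‖ ^ 2 / 2 ≤ S * (L x - L (x - S⁻¹ • v)) := by
  have h := le_add_inner_add_of_lipschitzWith_gradient hL hS.le hlip x (x - S⁻¹ • v)
  rw [sub_sub_cancel_left, inner_neg_right, real_inner_smul_right, norm_neg, norm_smul,
    Real.norm_of_nonneg (inv_nonneg.2 hS.le)] at h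
  have hdecrease : S⁻¹ * (inner ℝ (gradient L x) v - ‖v‖ ^ 2 / 2) ≤ L x - L (x - S⁻¹ • v) := by
    have : S / 2 * (S⁻¹ * ‖v‖) ^ 2 = S⁻¹ * (‖v‖ ^ 2 / 2) := by field_simp
    linarith
  calc _ = S * (S⁻¹ * (inner ℝ (gradient L x) v - ‖v‖ ^ 2 / 2)) := by field_simp
    _ ≤ _ := by gcongr

end Smooth

theorem le_mul_sub_sq_half_of_biased {α a c B G D : ℝ} (hα : 0 ≤ α) (hαa : α ≤ a) (ha1 : a ≤ 1)
    (hc : |c| ≤ B) (hD : |D| ≤ G) :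
    α / 2 * D ^ 2 - ((1 - α) * B * G + B ^ 2 / 2) ≤ D * (a * D + c) - (a * D + c) ^ 2 / 2 := by
  have hquad : α * D ^ 2 ≤ a * (2 - a) * D ^ 2 := by
    gcongr; nlinarith
  have hcross : -((1 - α) * B * G) ≤ (1 - a) * (c * D) := by
    have hcD : |c * D| ≤ B * G := by
      rw [abs_mul]; exact mul_le_mul hc hD (abs_nonneg _) ((abs_nonneg c).trans hc)
    have hBG : 0 ≤ B * G := (abs_nonneg _).trans hcD
    nlinarith [mul_nonneg (sub_nonneg.2 ha1) (neg_le_iff_add_nonneg.1 (neg_le_of_abs_le hcD)),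
      mul_nonneg (sub_nonneg.2 hαa) hBG]
  have hsq : c ^ 2 ≤ B ^ 2 := sq_le_sq' (neg_le_of_abs_le hc) (le_of_abs_le hc)
  nlinarith

theorem EuclideanSpace.inner_sub_norm_sq_half_eq_sum {ι : Type*} [Fintype ι]
    (x v : EuclideanSpace ℝ ι) :
    inner ℝ x v - ‖v‖ ^ 2 / 2 = ∑ j, (x j * v j - v j ^ 2 / 2) := by
  rw [EuclideanSpace.norm_sq_eq, PiLp.inner_apply, sum_sub_distrib, sum_div]
  simp [mul_comm]

theorem EuclideanSpace.le_inner_sub_norm_sq_half_of_biased {ι : Type*} [Fintype ι]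
    {α B G : ℝ} {x v : EuclideanSpace ℝ ι} {a c : ι → ℝ} (hα : 0 ≤ α)
    (hv : ∀ j, v j = a j * x j + c j) (ha : ∀ j, α ≤ a j ∧ a j ≤ 1) (hc : ∀ j, |c j| ≤ B)
    (hx : ∀ j, |x j| ≤ G) :
    α / 2 * ‖x‖ ^ 2 - Fintype.card ι * ((1 - α) * B * G + B ^ 2 / 2) ≤
      inner ℝ x v - ‖v‖ ^ 2 / 2 := by
  rw [EuclideanSpace.inner_sub_norm_sq_half_eq_sum, EuclideanSpace.norm_sq_eq, mul_sum,
    ← card_univ, ← nsmul_eq_mul, ← sum_const, ← sum_sub_distrib]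
  refine sum_le_sum fun j _ ↦ ?_
  rw [Real.norm_eq_abs, sq_abs, hv j]
  exact le_mul_sub_sq_half_of_biased hα (ha j).1 (ha j).2 (hc j) (hx j)

theorem sum_range_le_sub_add_of_le_sub_succ {f u : ℕ → ℝ} {T : ℕ} {K m : ℝ}
    (hstep : ∀ t < T, f t ≤ u t - u (t + 1) + K) (hm : m ≤ u T) :
    ∑ t ∈ range T, f t ≤ u 0 - m + T * K := by
  calc ∑ t ∈ range T, f t ≤ ∑ t ∈ range T, (u t - u (t + 1) + K) :=
        sum_le_sum fun t ht ↦ hstep t (mem_range.1 ht)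
    _ = u 0 - u T + T * K := by
        rw [sum_add_distrib, sum_range_sub', sum_const, card_range, nsmul_eq_mul]
    _ ≤ u 0 - m + T * K := by linarith

theorem biased_gradient_descent_convergence_general (d T : ℕ) (hT : 0 < T)
    (S : ℝ) (hS : 0 < S) (α : ℝ) (hα0 : 0 < α)
    (B : ℝ) (G : ℝ)
    (L : EuclideanSpace ℝ (Fin d) → ℝ) (hdiff : Differentiable ℝ L)
    (hlip : LipschitzWith S.toNNReal (gradient L))
    (Lstar : ℝ) (hLstar : ∀ x, Lstar ≤ L x)
    (hgradbound : ∀ (x : EuclideanSpace ℝ (Fin d)) (j : Fin d), |gradient L x j| ≤ G)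
    (θ g : ℕ → EuclideanSpace ℝ (Fin d)) (a c : ℕ → Fin d → ℝ)
    (hupd : ∀ t < T, θ (t + 1) = θ t - (1 / S) • g t)
    (hg : ∀ t < T, ∀ j, g t j = a t j * gradient L (θ t) j + c t j)
    (ha : ∀ t < T, ∀ j, α ≤ a t j ∧ a t j ≤ 1)
    (hc : ∀ t < T, ∀ j, |c t j| ≤ B) :
    (1 / T) * ∑ t ∈ Finset.range T, ‖gradient L (θ t)‖ ^ 2 ≤
      2 * S * (L (θ 0) - Lstar) / (α * T) + (2 * d / α) * ((1 - α) * B * G + B ^ 2 / 2) := by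
  have hstep : ∀ t < T, α / 2 * ‖gradient L (θ t)‖ ^ 2 ≤
      S * L (θ t) - S * L (θ (t + 1)) + d * ((1 - α) * B * G + B ^ 2 / 2) := by
    intro t ht
    have hprogress := EuclideanSpace.le_inner_sub_norm_sq_half_of_biased hα0.le (hg t ht)
      (ha t ht) (hc t ht) (hgradbound (θ t))
    have hdecrease := inner_sub_norm_sq_half_le_mul_sub_of_lipschitzWith_gradient hdiff hS hlip
      (θ t) (g t)
    rw [Fintype.card_fin] at hprogress
    rw [mul_sub, ← one_div, ← hupd t ht] at hdecrease
    linarith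
  have hsum := sum_range_le_sub_add_of_le_sub_succ hstep
    (mul_le_mul_of_nonneg_left (hLstar (θ T)) hS.le)
  rw [← mul_sum] at hsum
  have hTpos : (0 : ℝ) < T := by exact_mod_cast hT
  calc (1 / T) * ∑ t ∈ range T, ‖gradient L (θ t)‖ ^ 2
      = 2 / (α * T) * (α / 2 * ∑ t ∈ range T, ‖gradient L (θ t)‖ ^ 2) := by field_simp
    _ ≤ 2 / (α * T) * (S * L (θ 0) - S * Lstar + T * (d * ((1 - α) * B * G + B ^ 2 / 2))) := by
      gcongr
    _ = _ := by field_simp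

/-- Convergence of gradient descent with multiplicatively biased gradients (deterministic
skeleton of Theorem 1): with update `θ^{t+1} = θ^t - (1/S) g^t`, where
`g^t_j = a^t_j ∂ⱼL(θ^t) + c^t_j`, `α ≤ a^t_j ≤ 1`, `|c^t_j| ≤ B`, a lower bound `L*` on `L`
and a bound `G` on the partial derivatives, the average squared gradient norm satisfies
`(1/T) ∑_{t<T} ‖∇L(θ^t)‖² ≤ 2S(L(θ⁰) - L*)/(αT) + (2d/α)((1 - α) B G + B²/2)`. -/
theorem biased_gradient_descent_convergence (d T : ℕ) (hd : 0 < d) (hT : 0 < T)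
    (S : ℝ) (hS : 0 < S) (α : ℝ) (hα0 : 0 < α) (hα1 : α ≤ 1)
    (B : ℝ) (hB : 0 ≤ B) (G : ℝ) (hG : 0 ≤ G)
    (L : EuclideanSpace ℝ (Fin d) → ℝ) (hdiff : Differentiable ℝ L)
    (hlip : LipschitzWith S.toNNReal (gradient L))
    (Lstar : ℝ) (hLstar : ∀ x, Lstar ≤ L x)
    (hgradbound : ∀ (x : EuclideanSpace ℝ (Fin d)) (j : Fin d), |gradient L x j| ≤ G)
    (θ g : ℕ → EuclideanSpace ℝ (Fin d)) (a c : ℕ → Fin d → ℝ)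
    (hupd : ∀ t < T, θ (t + 1) = θ t - (1 / S) • g t)
    (hg : ∀ t < T, ∀ j, g t j = a t j * gradient L (θ t) j + c t j)
    (ha : ∀ t < T, ∀ j, α ≤ a t j ∧ a t j ≤ 1)
    (hc : ∀ t < T, ∀ j, |c t j| ≤ B) :
    (1 / T) * ∑ t ∈ Finset.range T, ‖gradient L (θ t)‖ ^ 2 ≤
      2 * S * (L (θ 0) - Lstar) / (α * T) + (2 * d / α) * ((1 - α) * B * G + B ^ 2 / 2) :=
  biased_gradient_descent_convergence_general d T hT S hS α hα0 B G L hdiff hlip Lstar hLstar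
    hgradbound θ g a c hupd hg ha hc
end
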